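/- arXiv:2212.11702 — 2 statements merged into one kernel-verified Lean document; each statement's English description precedes it below -/
import Mathlib

section
/- In the setting of Theorem 1 (tasks ρ with nonempty admissible label sets Y(ρ) ⊆ Fin C, class-conditional distributions π(·|y) on X, task query measures π_ρ with uniform labels over Y(ρ), mixture π_μ = μ.bind (ρ ↦ π_ρ)), define for each measurable feature map g : X → EuclideanSpace ℝ (Fin m) and classifier W : Fin C → EuclideanSpace ℝ (Fin m) the GLS risk E_GLS(W, g) = ∫⁻_ρ ∫⁻_{(x,y)} ENNReal.ofReal( ℓ_{Y(ρ)}(W g(x), y) ) dπ_ρ dμ and the pre-training risk L(W, g) = ∫⁻_{(x,y)} ENNReal.ofReal( ℓ(W g(x), y) ) dπ_μ. If the global classes are separable in the sense that the infimum over all pairs (W, g) of L(W, g) equals 0, then the infimum over all pairs (W, g) of E_GLS(W, g) also equals 0; in particular the two infima are equal. -/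
open MeasureTheory RealInnerProductSpace ENNReal

/-- Multi-class cross-entropy loss over all `C` classes. -/
noncomputable def crossEntropy (C : ℕ) (a : Fin C → ℝ) (y : Fin C) : ℝ :=
  -Real.log (Real.exp (a y) / ∑ z : Fin C, Real.exp (a z))

/-- Cross-entropy loss restricted to the subset `T` of classes. -/
noncomputable def crossEntropyOn (C : ℕ) (T : Finset (Fin C)) (a : Fin C → ℝ) (y : Fin C) : ℝ :=
  -Real.log (Real.exp (a y) / ∑ z ∈ T, Real.exp (a z))

/-! Restricting the softmax to fewer classes can only shrink its denominator, so the restricted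
loss `ℓ_T` is pointwise below the full loss `ℓ`. Integrating against the mixture `μ.bind πρ`
is integrating task by task, hence every pair `(W, g)` has GLS risk at most its pre-training
risk, and a vanishing infimum of the latter forces one of the former. -/

section Loss

variable {C : ℕ} {T T' : Finset (Fin C)} {a : Fin C → ℝ} {y : Fin C}

theorem crossEntropyOn_nonneg (hy : y ∈ T) : 0 ≤ crossEntropyOn C T a y := by
  have hle : Real.exp (a y) ≤ ∑ z ∈ T, Real.exp (a z) :=
    Finset.single_le_sum (fun z _ => (Real.exp_pos (a z)).le) hy
  have hpos : 0 < ∑ z ∈ T, Real.exp (a z) := (Real.exp_pos _).trans_le hle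
  exact neg_nonneg.mpr <| Real.log_nonpos (by positivity) ((div_le_one hpos).mpr hle)

theorem crossEntropyOn_mono (hTT' : T ⊆ T') (hy : y ∈ T') :
    crossEntropyOn C T a y ≤ crossEntropyOn C T' a y := by
  rcases T.eq_empty_or_nonempty with rfl | hT
  · simpa [crossEntropyOn] using crossEntropyOn_nonneg hy
  · have hsum_pos : 0 < ∑ z ∈ T, Real.exp (a z) :=
      Finset.sum_pos (fun z _ => Real.exp_pos _) hT
    have hsum_le : ∑ z ∈ T, Real.exp (a z) ≤ ∑ z ∈ T', Real.exp (a z) :=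
      Finset.sum_le_sum_of_subset_of_nonneg hTT' fun z _ _ => (Real.exp_pos _).le
    have hsum'_pos : 0 < ∑ z ∈ T', Real.exp (a z) := hsum_pos.trans_le hsum_le
    refine neg_le_neg <| Real.log_le_log (by positivity) ?_
    exact div_le_div_of_nonneg_left (Real.exp_pos _).le hsum_pos hsum_le

theorem crossEntropyOn_le_crossEntropy (T : Finset (Fin C)) (a : Fin C → ℝ) (y : Fin C) :
    crossEntropyOn C T a y ≤ crossEntropy C a y :=
  crossEntropyOn_mono (Finset.subset_univ T) (Finset.mem_univ y)

end Loss

theorem Measurable.crossEntropy {X : Type*} [MeasurableSpace X] {C : ℕ} {f : X → Fin C → ℝ}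
    (hf : Measurable f) : Measurable fun p : X × Fin C => crossEntropy C (f p.1) p.2 := by
  refine measurable_from_prod_countable_left fun y => ?_
  unfold _root_.crossEntropy
  have hexp : ∀ z, Measurable fun x => Real.exp (f x z) :=
    fun z => Real.measurable_exp.comp (measurable_pi_apply z |>.comp hf)
  exact ((hexp y).div (Finset.measurable_sum _ fun z _ => hexp z)).log.neg

theorem lintegral_crossEntropyOn_le_lintegral_bind {R X : Type*} [MeasurableSpace R]
    [MeasurableSpace X] {C : ℕ} {μ : Measure R} {πρ : R → Measure (X × Fin C)}
    (hπρ : AEMeasurable πρ μ) (Y : R → Finset (Fin C)) {f : X → Fin C → ℝ}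
    (hf : Measurable f) :
    ∫⁻ ρ, (∫⁻ p, ENNReal.ofReal (crossEntropyOn C (Y ρ) (f p.1) p.2) ∂(πρ ρ)) ∂μ ≤
      ∫⁻ p, ENNReal.ofReal (crossEntropy C (f p.1) p.2) ∂(μ.bind πρ) := by
  rw [Measure.lintegral_bind hπρ hf.crossEntropy.ennreal_ofReal.aemeasurable]
  exact lintegral_mono fun ρ => lintegral_mono fun p =>
    ENNReal.ofReal_le_ofReal (crossEntropyOn_le_crossEntropy (Y ρ) _ p.2)

theorem gls_inf_eq_pretraining_inf_of_separable_general
    {R X : Type*} [MeasurableSpace R] [MeasurableSpace X]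
    (C m : ℕ)
    (μ : Measure R)
    (Y : R → Finset (Fin C))
    (πρ : R → Measure (X × Fin C))
    (hmeas : Measurable πρ)
    (hsep : (⨅ (W : Fin C → EuclideanSpace ℝ (Fin m)) (g : X → EuclideanSpace ℝ (Fin m))
        (_ : Measurable g),
        ∫⁻ p, ENNReal.ofReal
          (crossEntropy C (fun z => ⟪W z, g p.1⟫) p.2) ∂(μ.bind πρ)) = 0) :
    (⨅ (W : Fin C → EuclideanSpace ℝ (Fin m)) (g : X → EuclideanSpace ℝ (Fin m))
        (_ : Measurable g),
        ∫⁻ ρ, (∫⁻ p, ENNReal.ofReal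
          (crossEntropyOn C (Y ρ) (fun z => ⟪W z, g p.1⟫) p.2) ∂(πρ ρ)) ∂μ) = 0 ∧
    (⨅ (W : Fin C → EuclideanSpace ℝ (Fin m)) (g : X → EuclideanSpace ℝ (Fin m))
        (_ : Measurable g),
        ∫⁻ ρ, (∫⁻ p, ENNReal.ofReal
          (crossEntropyOn C (Y ρ) (fun z => ⟪W z, g p.1⟫) p.2) ∂(πρ ρ)) ∂μ) =
      (⨅ (W : Fin C → EuclideanSpace ℝ (Fin m)) (g : X → EuclideanSpace ℝ (Fin m))
        (_ : Measurable g),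
        ∫⁻ p, ENNReal.ofReal
          (crossEntropy C (fun z => ⟪W z, g p.1⟫) p.2) ∂(μ.bind πρ)) := by
  have hgls : (⨅ (W : Fin C → EuclideanSpace ℝ (Fin m)) (g : X → EuclideanSpace ℝ (Fin m))
      (_ : Measurable g),
      ∫⁻ ρ, (∫⁻ p, ENNReal.ofReal
        (crossEntropyOn C (Y ρ) (fun z => ⟪W z, g p.1⟫) p.2) ∂(πρ ρ)) ∂μ) = 0 := by
    refine le_antisymm (hsep ▸ iInf₂_mono fun W g => iInf_mono fun hg => ?_) bot_le
    exact lintegral_crossEntropyOn_le_lintegral_bind hmeas.aemeasurable Y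
      (measurable_pi_lambda _ fun z => measurable_const.inner hg)
  exact ⟨hgls, hgls.trans hsep.symm⟩

/-- **Theorem 1, Eq. (15).** If the global classes are separable, i.e. the
infimum of the pre-training risk over all pairs `(W, g)` (with `g` measurable) is `0`, then
the infimum of the GLS meta-risk also equals `0`; in particular the two infima coincide. -/
theorem gls_inf_eq_pretraining_inf_of_separable
    {R X : Type*} [MeasurableSpace R] [MeasurableSpace X]
    (C m : ℕ) (hC : 0 < C) (hm : 0 < m)
    (μ : Measure R) [IsProbabilityMeasure μ]
    (Y : R → Finset (Fin C)) (hY : ∀ ρ, (Y ρ).Nonempty)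
    (π : Fin C → Measure X) (hπ : ∀ y, IsProbabilityMeasure (π y))
    (πρ : R → Measure (X × Fin C))
    (hπρ : ∀ ρ, πρ ρ =
      ∑ y ∈ Y ρ, ((Y ρ).card : ℝ≥0∞)⁻¹ • ((π y).map (fun x => (x, y))))
    (hmeas : Measurable πρ)
    (hsep : (⨅ (W : Fin C → EuclideanSpace ℝ (Fin m)) (g : X → EuclideanSpace ℝ (Fin m))
        (_ : Measurable g),
        ∫⁻ p, ENNReal.ofReal
          (crossEntropy C (fun z => ⟪W z, g p.1⟫) p.2) ∂(μ.bind πρ)) = 0) :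
    (⨅ (W : Fin C → EuclideanSpace ℝ (Fin m)) (g : X → EuclideanSpace ℝ (Fin m))
        (_ : Measurable g),
        ∫⁻ ρ, (∫⁻ p, ENNReal.ofReal
          (crossEntropyOn C (Y ρ) (fun z => ⟪W z, g p.1⟫) p.2) ∂(πρ ρ)) ∂μ) = 0 ∧
    (⨅ (W : Fin C → EuclideanSpace ℝ (Fin m)) (g : X → EuclideanSpace ℝ (Fin m))
        (_ : Measurable g),
        ∫⁻ ρ, (∫⁻ p, ENNReal.ofReal
          (crossEntropyOn C (Y ρ) (fun z => ⟪W z, g p.1⟫) p.2) ∂(πρ ρ)) ∂μ) =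
      (⨅ (W : Fin C → EuclideanSpace ℝ (Fin m)) (g : X → EuclideanSpace ℝ (Fin m))
        (_ : Measurable g),
        ∫⁻ p, ENNReal.ofReal
          (crossEntropy C (fun z => ⟪W z, g p.1⟫) p.2) ∂(μ.bind πρ)) :=
  gls_inf_eq_pretraining_inf_of_separable_general C m μ Y πρ hmeas hsep
end

section
/- Fix positive integers C and m, a feature vector v ∈ EuclideanSpace ℝ (Fin m), and a label y : Fin C. For every W : Fin C → EuclideanSpace ℝ (Fin m), writing p = softmax(Wv), the inequality (1 - p_y)² + ∑_{z ≠ y} p_z² ≤ 2 holds, and consequently the gradient G(W) of the map W ↦ ℓ(Wv, y) with respect to the Frobenius structure satisfies ‖G(W)‖_F ≤ sqrt(2) · ‖v‖; in particular W ↦ ℓ(Wv, y) is Lipschitz with constant sqrt(2) · ‖v‖ with respect to the Frobenius norm. -/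
open RealInnerProductSpace

/-- The softmax of a score vector. -/
noncomputable def softmax (C : ℕ) (a : Fin C → ℝ) (z : Fin C) : ℝ :=
  Real.exp (a z) / ∑ w : Fin C, Real.exp (a w)

/-- The gradient of `W ↦ ℓ(Wv, y)` with respect to the classifier `W`:
its `z`-th row is `(softmax(Wv)_z - δ_{z y}) • v`. -/
noncomputable def classifierGrad (C m : ℕ) (v : EuclideanSpace ℝ (Fin m)) (y : Fin C)
    (W : PiLp 2 fun _ : Fin C => EuclideanSpace ℝ (Fin m)) :
    PiLp 2 fun _ : Fin C => EuclideanSpace ℝ (Fin m) :=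
  WithLp.toLp 2 fun z => (softmax C (fun w => ⟪W w, v⟫) z - if z = y then 1 else 0) • v

/-! Since `0 ≤ p_z ≤ 1` and `∑ p = 1`, one has `∑_{z ≠ y} p_z² ≤ ∑_{z ≠ y} p_z = 1 - p_y` and
`(1 - p_y)² ≤ 1 - p_y`, so the sum of squares is at most `2 (1 - p_y) ≤ 2`. Every row of the
gradient is a multiple of `v`, so its Frobenius norm is `‖p - e_y‖ ‖v‖ ≤ √2 ‖v‖`. By the chain rule
through the linear score map `W ↦ Wv`, `classifierGrad` is the Fréchet gradient of the loss, and the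
mean value inequality turns the gradient bound into the Lipschitz bound. -/

lemma sum_exp_pos {ι : Type*} [Fintype ι] [Nonempty ι] (a : ι → ℝ) :
    0 < ∑ i, Real.exp (a i) :=
  Finset.sum_pos (fun _ _ => Real.exp_pos _) Finset.univ_nonempty

section ProbabilityVector

variable {ι : Type*} [Fintype ι] [DecidableEq ι]

lemma one_sub_sq_add_sum_erase_sq_le_two {p : ι → ℝ} (hp_nonneg : ∀ i, 0 ≤ p i)
    (hp_sum : ∑ i, p i = 1) (y : ι) :
    (1 - p y) ^ 2 + ∑ z ∈ Finset.univ.erase y, p z ^ 2 ≤ 2 := by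
  have hp_le_one : ∀ i, p i ≤ 1 := fun i =>
    hp_sum ▸ Finset.single_le_sum (fun j _ => hp_nonneg j) (Finset.mem_univ i)
  have hrest : ∑ z ∈ Finset.univ.erase y, p z = 1 - p y := by
    rw [Finset.sum_erase_eq_sub (Finset.mem_univ y), hp_sum]
  have hsq : ∑ z ∈ Finset.univ.erase y, p z ^ 2 ≤ 1 - p y :=
    hrest ▸ Finset.sum_le_sum fun z _ => by nlinarith [hp_nonneg z, hp_le_one z]
  nlinarith [hp_nonneg y, hp_le_one y]

lemma sum_sq_sub_ite_eq (p : ι → ℝ) (y : ι) :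
    ∑ z, (p z - if z = y then 1 else 0) ^ 2 =
      (1 - p y) ^ 2 + ∑ z ∈ Finset.univ.erase y, p z ^ 2 := by
  rw [← Finset.add_sum_erase _ _ (Finset.mem_univ y), if_pos rfl, ← neg_sub, neg_sq]
  congr 1
  refine Finset.sum_congr rfl fun z hz => ?_
  rw [if_neg (Finset.ne_of_mem_erase hz), sub_zero]

end ProbabilityVector

section Rows

variable {ι E : Type*}

lemma norm_toLp_smul_const [Fintype ι] [SeminormedAddCommGroup E] [NormedSpace ℝ E] (c : ι → ℝ) (v : E) :
    ‖(WithLp.toLp 2 fun i => c i • v : PiLp 2 fun _ : ι => E)‖ = √(∑ i, c i ^ 2) * ‖v‖ := by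
  rw [PiLp.norm_eq_of_L2]
  simp [norm_smul, mul_pow, ← Finset.sum_mul, Real.sqrt_mul', sq_abs]

variable [NormedAddCommGroup E] [InnerProductSpace ℝ E]

noncomputable def scoreMap (v : E) : (PiLp 2 fun _ : ι => E) →L[ℝ] (ι → ℝ) :=
  ContinuousLinearMap.pi fun z => (innerSL ℝ v).comp (PiLp.proj 2 (fun _ : ι => E) z)

lemma scoreMap_apply (v : E) (W : PiLp 2 fun _ : ι => E) :
    scoreMap v W = fun z => ⟪W z, v⟫ :=
  funext fun _ => real_inner_comm _ _

end Rows

section Softmax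

variable {C : ℕ} (a : Fin C → ℝ)

lemma softmax_nonneg (z : Fin C) : 0 ≤ softmax C a z := by
  unfold softmax
  positivity

lemma softmax_sum_eq_one [Nonempty (Fin C)] : ∑ z, softmax C a z = 1 := by
  simp only [softmax, ← Finset.sum_div, div_self (sum_exp_pos a).ne']

lemma one_sub_softmax_sq_add_sum_erase_sq_le_two (y : Fin C) :
    (1 - softmax C a y) ^ 2 + ∑ z ∈ Finset.univ.erase y, softmax C a z ^ 2 ≤ 2 :=
  have : Nonempty (Fin C) := ⟨y⟩
  one_sub_sq_add_sum_erase_sq_le_two (softmax_nonneg a) (softmax_sum_eq_one a) y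

lemma crossEntropy_eq_log_sum_exp_sub (y : Fin C) :
    crossEntropy C a y = Real.log (∑ z, Real.exp (a z)) - a y := by
  have : Nonempty (Fin C) := ⟨y⟩
  rw [crossEntropy, Real.log_div (Real.exp_ne_zero _) (sum_exp_pos a).ne', Real.log_exp, neg_sub]

lemma hasFDerivAt_crossEntropy (y : Fin C) :
    HasFDerivAt (fun b => crossEntropy C b y)
      (∑ z, (softmax C a z - if z = y then 1 else 0) • ContinuousLinearMap.proj z :
        (Fin C → ℝ) →L[ℝ] ℝ) a := by
  have : Nonempty (Fin C) := ⟨y⟩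
  have hlse := (HasFDerivAt.fun_sum fun z _ => (hasFDerivAt_apply z a).exp).log
    (sum_exp_pos a).ne'
  rw [funext fun b => crossEntropy_eq_log_sum_exp_sub b y]
  refine (hlse.sub (hasFDerivAt_apply y a)).congr_fderiv ?_
  ext h
  simp [softmax, sub_mul, Finset.sum_sub_distrib, div_mul_eq_mul_div, ← Finset.sum_div,
    inv_mul_eq_div]

end Softmax

section Classifier

variable {C m : ℕ} (v : EuclideanSpace ℝ (Fin m)) (y : Fin C)

lemma hasFDerivAt_crossEntropy_scores (W : PiLp 2 fun _ : Fin C => EuclideanSpace ℝ (Fin m)) :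
    HasFDerivAt (fun W : PiLp 2 fun _ : Fin C => EuclideanSpace ℝ (Fin m) =>
        crossEntropy C (fun z => ⟪W z, v⟫) y)
      (innerSL ℝ (classifierGrad C m v y W)) W := by
  have h := (hasFDerivAt_crossEntropy (scoreMap v W) y).comp W (scoreMap v).hasFDerivAt
  simp only [Function.comp_def, scoreMap_apply] at h
  refine h.congr_fderiv ?_
  ext H
  simp only [ContinuousLinearMap.comp_apply, FunLike.coe_sum, Finset.sum_apply,
    FunLike.coe_smul, Pi.smul_apply, ContinuousLinearMap.proj_apply, scoreMap_apply,
    innerSL_apply_apply, classifierGrad, smul_eq_mul,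
    PiLp.inner_apply (f := fun _ : Fin C => EuclideanSpace ℝ (Fin m)), real_inner_smul_left,
    real_inner_comm v]

lemma norm_classifierGrad_le (W : PiLp 2 fun _ : Fin C => EuclideanSpace ℝ (Fin m)) :
    ‖classifierGrad C m v y W‖ ≤ √2 * ‖v‖ := by
  rw [classifierGrad, norm_toLp_smul_const, sum_sq_sub_ite_eq]
  gcongr
  exact one_sub_softmax_sq_add_sum_erase_sq_le_two _ y

lemma lipschitzWith_crossEntropy_scores :
    LipschitzWith (NNReal.sqrt 2 * ‖v‖₊)
      (fun W : PiLp 2 fun _ : Fin C => EuclideanSpace ℝ (Fin m) =>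
        crossEntropy C (fun z => ⟪W z, v⟫) y) := by
  rw [← lipschitzOnWith_univ]
  refine convex_univ.lipschitzOnWith_of_nnnorm_hasFDerivWithin_le
    (fun W _ => (hasFDerivAt_crossEntropy_scores v y W).hasFDerivWithinAt) fun W _ => ?_
  rw [← NNReal.coe_le_coe, coe_nnnorm, innerSL_apply_norm, NNReal.coe_mul, Real.coe_sqrt,
    coe_nnnorm]
  exact norm_classifierGrad_le v y W

end Classifier

theorem crossEntropy_classifier_grad_bound_and_lipschitz_general
    (C m : ℕ)
    (v : EuclideanSpace ℝ (Fin m)) (y : Fin C) :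
    (∀ W : PiLp 2 fun _ : Fin C => EuclideanSpace ℝ (Fin m),
      (1 - softmax C (fun w => ⟪W w, v⟫) y) ^ 2 +
        ∑ z ∈ Finset.univ.erase y, softmax C (fun w => ⟪W w, v⟫) z ^ 2 ≤ 2) ∧
    (∀ W : PiLp 2 fun _ : Fin C => EuclideanSpace ℝ (Fin m),
      ‖classifierGrad C m v y W‖ ≤ Real.sqrt 2 * ‖v‖) ∧
    LipschitzWith (NNReal.sqrt 2 * ‖v‖₊)
      (fun W : PiLp 2 fun _ : Fin C => EuclideanSpace ℝ (Fin m) =>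
        crossEntropy C (fun z => ⟪W z, v⟫) y) :=
  ⟨fun _ => one_sub_softmax_sq_add_sum_erase_sq_le_two _ y, norm_classifierGrad_le v y,
    lipschitzWith_crossEntropy_scores v y⟩

/-- With `p = softmax (Wv)` one has `(1 - p_y)² + ∑_{z ≠ y} p_z² ≤ 2`,
hence `‖G(W)‖_F ≤ √2 ‖v‖`; in particular `W ↦ ℓ(Wv, y)` is `√2 ‖v‖`-Lipschitz with respect
to the Frobenius norm. -/
theorem crossEntropy_classifier_grad_bound_and_lipschitz
    (C m : ℕ) (hC : 0 < C) (hm : 0 < m)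
    (v : EuclideanSpace ℝ (Fin m)) (y : Fin C) :
    (∀ W : PiLp 2 fun _ : Fin C => EuclideanSpace ℝ (Fin m),
      (1 - softmax C (fun w => ⟪W w, v⟫) y) ^ 2 +
        ∑ z ∈ Finset.univ.erase y, softmax C (fun w => ⟪W w, v⟫) z ^ 2 ≤ 2) ∧
    (∀ W : PiLp 2 fun _ : Fin C => EuclideanSpace ℝ (Fin m),
      ‖classifierGrad C m v y W‖ ≤ Real.sqrt 2 * ‖v‖) ∧
    LipschitzWith (NNReal.sqrt 2 * ‖v‖₊)
      (fun W : PiLp 2 fun _ : Fin C => EuclideanSpace ℝ (Fin m) =>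
        crossEntropy C (fun z => ⟪W z, v⟫) y) :=
  crossEntropy_classifier_grad_bound_and_lipschitz_general C m v y
end
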